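/- Let Φ*(η₁,η₂) = η₁ log η₁ + η₂ log η₂ − (1 + η₁ + η₂) log(1 + η₁ + η₂) on Ω* = (0,∞)². Then at every point of Ω* the matrix R_{ij} = −∂²(log det Hess Φ*)/∂η_i∂η_j equals −[[1/η₁² + 1/S², 1/S²],[1/S², 1/η₂² + 1/S²]] with S = 1 + η₁ + η₂, and in particular R is negative definite. (This is the statement that the Kähler manifold 𝕎_NegTri has negative Ricci curvature.) -/

import Mathlib

open Real Matrix

/-- Partial derivative of `f : ℝⁿ → ℝ` in the `i`-th coordinate direction. -/
noncomputable def pd {n : ℕ} (i : Fin n) (f : (Fin n → ℝ) → ℝ) : (Fin n → ℝ) → ℝ :=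
  fun x => fderiv ℝ f x (Pi.single i 1)

/-- Hessian matrix of second partial derivatives of `f : ℝⁿ → ℝ`. -/
noncomputable def hessian {n : ℕ} (f : (Fin n → ℝ) → ℝ) (x : Fin n → ℝ) :
    Matrix (Fin n) (Fin n) ℝ :=
  Matrix.of fun i j => pd i (pd j f) x

/-- The Legendre dual of the negative trinomial log-partition function. -/
noncomputable def ΦNegTriStar (η : Fin 2 → ℝ) : ℝ :=
  η 0 * Real.log (η 0) + η 1 * Real.log (η 1) -
    (1 + η 0 + η 1) * Real.log (1 + η 0 + η 1)

/-- The Ricci matrix `R_{ij} = -∂²(log det Hess Φ*)/∂η_i∂η_j` of `𝕎_NegTri`. -/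
noncomputable def ricciNegTri (η : Fin 2 → ℝ) : Matrix (Fin 2) (Fin 2) ℝ :=
  -(hessian (fun y => Real.log ((hessian ΦNegTriStar y).det)) η)

/-!
Both `Φ*` and `log det Hess Φ*` have the shape `z ↦ ∑ₖ f (zₖ) + g (S)` with `S = 1 + ∑ₖ zₖ`, and
the Hessian of such a function is `diag (f'' (zₖ)) + g'' (S) • J`, with `J` the all-ones matrix.
For `Φ*` this gives `Hess Φ* = diag (1 / ηₖ) - J / S`, of determinant `1 / (η₁ η₂ S)`, so
`log det Hess Φ* = -∑ₖ log ηₖ - log S` is again of that shape, with Hessian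
`diag (1 / ηₖ²) + J / S²`: a positive diagonal matrix plus a positive semidefinite one.
-/

section SumSeparable

variable {n : ℕ} {x : Fin n → ℝ}

open ContinuousLinearMap

theorem pd_eq_of_hasFDerivAt {f : (Fin n → ℝ) → ℝ} {L : (Fin n → ℝ) →L[ℝ] ℝ}
    (h : HasFDerivAt f L x) (i : Fin n) : pd i f x = L (Pi.single i 1) := by
  rw [pd, h.fderiv]

theorem pd_congr_of_eventuallyEq {f g : (Fin n → ℝ) → ℝ} (h : f =ᶠ[nhds x] g) (i : Fin n) :
    pd i f x = pd i g x := by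
  rw [pd, pd, h.fderiv_eq]

theorem hessian_congr_of_eventuallyEq {f g : (Fin n → ℝ) → ℝ} (h : f =ᶠ[nhds x] g) :
    hessian f x = hessian g x := by
  ext i j
  exact pd_congr_of_eventuallyEq
    (h.eventuallyEq_nhds.mono fun _ hz => pd_congr_of_eventuallyEq hz j) i

theorem hasFDerivAt_comp_apply {φ : ℝ → ℝ} {φ' : ℝ} {j : Fin n} (hφ : HasDerivAt φ φ' (x j)) :
    HasFDerivAt (fun z : Fin n → ℝ => φ (z j)) (φ' • (proj j : (Fin n → ℝ) →L[ℝ] ℝ)) x :=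
  hφ.comp_hasFDerivAt x (hasFDerivAt_apply j x)

theorem hasFDerivAt_comp_one_add_sum {ψ : ℝ → ℝ} {ψ' : ℝ}
    (hψ : HasDerivAt ψ ψ' (1 + ∑ k, x k)) :
    HasFDerivAt (fun z : Fin n → ℝ => ψ (1 + ∑ k, z k))
      (ψ' • ∑ k, (proj k : (Fin n → ℝ) →L[ℝ] ℝ)) x := by
  refine hψ.comp_hasFDerivAt x ?_
  simpa using (hasFDerivAt_const (1 : ℝ) x).fun_add (HasFDerivAt.fun_sum (u := Finset.univ)
    fun k _ => (proj k : (Fin n → ℝ) →L[ℝ] ℝ).hasFDerivAt)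

theorem pd_sum_comp_apply_add_comp_one_add_sum {f f' g g' : ℝ → ℝ}
    (hf : ∀ k, HasDerivAt f (f' (x k)) (x k))
    (hg : HasDerivAt g (g' (1 + ∑ k, x k)) (1 + ∑ k, x k)) (i : Fin n) :
    pd i (fun z => ∑ k, f (z k) + g (1 + ∑ k, z k)) x = f' (x i) + g' (1 + ∑ k, x k) := by
  rw [pd_eq_of_hasFDerivAt
    ((HasFDerivAt.fun_sum fun k _ => hasFDerivAt_comp_apply (hf k)).fun_add
      (hasFDerivAt_comp_one_add_sum hg))]
  simp [Pi.single_apply]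

theorem pd_comp_apply_add_comp_one_add_sum {φ ψ : ℝ → ℝ} {φ' ψ' : ℝ} {j : Fin n}
    (hφ : HasDerivAt φ φ' (x j)) (hψ : HasDerivAt ψ ψ' (1 + ∑ k, x k)) (i : Fin n) :
    pd i (fun z => φ (z j) + ψ (1 + ∑ k, z k)) x = (if i = j then φ' else 0) + ψ' := by
  rw [pd_eq_of_hasFDerivAt
    ((hasFDerivAt_comp_apply hφ).fun_add (hasFDerivAt_comp_one_add_sum hψ))]
  simp [Pi.single_apply, eq_comm]

theorem hessian_sum_comp_apply_add_comp_one_add_sum {f f' f'' g g' g'' : ℝ → ℝ}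
    (hf : ∀ᶠ z in nhds x, ∀ k, HasDerivAt f (f' (z k)) (z k))
    (hg : ∀ᶠ z in nhds x, HasDerivAt g (g' (1 + ∑ k, z k)) (1 + ∑ k, z k))
    (hf' : ∀ k, HasDerivAt f' (f'' (x k)) (x k))
    (hg' : HasDerivAt g' (g'' (1 + ∑ k, x k)) (1 + ∑ k, x k)) :
    hessian (fun z => ∑ k, f (z k) + g (1 + ∑ k, z k)) x =
      diagonal (fun k => f'' (x k)) + of fun _ _ => g'' (1 + ∑ k, x k) := by
  ext i j
  have hpd : pd j (fun z => ∑ k, f (z k) + g (1 + ∑ k, z k)) =ᶠ[nhds x]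
      fun z => f' (z j) + g' (1 + ∑ k, z k) :=
    (hf.and hg).mono fun z hz => pd_sum_comp_apply_add_comp_one_add_sum hz.1 hz.2 j
  rw [hessian, of_apply, pd_congr_of_eventuallyEq hpd,
    pd_comp_apply_add_comp_one_add_sum (hf' j) hg']
  by_cases hij : i = j <;> simp [hij]

theorem eventually_forall_pos_nhds (hx : ∀ k, 0 < x k) : ∀ᶠ z in nhds x, ∀ k, 0 < z k :=
  Filter.eventually_all.2 fun k => ((continuous_apply k).tendsto x).eventually (lt_mem_nhds (hx k))

theorem one_add_sum_pos (hx : ∀ k, 0 < x k) : 0 < 1 + ∑ k, x k :=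
  add_pos_of_pos_of_nonneg one_pos (Finset.sum_nonneg fun k _ => (hx k).le)

end SumSeparable

theorem Matrix.det_diagonal_add_of_const_fin_two {R : Type*} [CommRing R] (a : Fin 2 → R) (c : R) :
    (diagonal a + of fun _ _ => c).det = a 0 * a 1 + c * (a 0 + a 1) := by
  simp only [det_fin_two, add_apply, of_apply, diagonal_apply_eq,
    diagonal_apply_ne _ zero_ne_one, diagonal_apply_ne _ one_ne_zero]
  ring

theorem Matrix.posDef_diagonal_add_of_const {ι : Type*} [Fintype ι] [DecidableEq ι]
    {d : ι → ℝ} {c : ℝ} (hd : ∀ i, 0 < d i) (hc : 0 ≤ c) :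
    (diagonal d + of fun _ _ => c).PosDef := by
  have hJ : (of fun _ _ => c : Matrix ι ι ℝ) = c • vecMulVec 1 (star 1) := by
    ext; simp
  rw [hJ]
  exact (posDef_diagonal_iff.2 hd).add_posSemidef ((posSemidef_vecMulVec_self_star 1).smul hc)

theorem ΦNegTriStar_eq_sum :
    ΦNegTriStar = fun z => ∑ k, z k * log (z k) + negMulLog (1 + ∑ k, z k) := by
  ext z
  simp only [ΦNegTriStar, negMulLog, Fin.sum_univ_two, add_assoc]
  ring

theorem hessian_ΦNegTriStar {x : Fin 2 → ℝ} (hx : ∀ k, 0 < x k) :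
    hessian ΦNegTriStar x =
      diagonal (fun k => (x k)⁻¹) + of fun _ _ => -(1 + ∑ k, x k)⁻¹ := by
  rw [ΦNegTriStar_eq_sum]
  refine hessian_sum_comp_apply_add_comp_one_add_sum (f := fun t => t * log t)
    (g := negMulLog) (f' := fun t => log t + 1) (g' := fun t => -log t - 1)
    (f'' := fun t => t⁻¹) (g'' := fun t => -t⁻¹) ?_ ?_
    (fun k => (hasDerivAt_log (hx k).ne').add_const 1)
    ((hasDerivAt_log (one_add_sum_pos hx).ne').fun_neg.sub_const 1)
  · exact (eventually_forall_pos_nhds hx).mono fun z hz k => hasDerivAt_mul_log (hz k).ne'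
  · exact (eventually_forall_pos_nhds hx).mono fun z hz =>
      hasDerivAt_negMulLog (one_add_sum_pos hz).ne'

theorem det_hessian_ΦNegTriStar {x : Fin 2 → ℝ} (hx : ∀ k, 0 < x k) :
    (hessian ΦNegTriStar x).det = (x 0 * x 1 * (1 + ∑ k, x k))⁻¹ := by
  have h0 := (hx 0).ne'
  have h1 := (hx 1).ne'
  have hS := (one_add_sum_pos hx).ne'
  rw [hessian_ΦNegTriStar hx, det_diagonal_add_of_const_fin_two]
  simp only [Fin.sum_univ_two] at hS ⊢
  field_simp
  ring

theorem log_det_hessian_ΦNegTriStar {x : Fin 2 → ℝ} (hx : ∀ k, 0 < x k) :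
    log (hessian ΦNegTriStar x).det = ∑ k, -log (x k) + -log (1 + ∑ k, x k) := by
  rw [det_hessian_ΦNegTriStar hx, log_inv, log_mul (by simp [(hx 0).ne', (hx 1).ne'])
    (one_add_sum_pos hx).ne', log_mul (hx 0).ne' (hx 1).ne']
  simp only [Fin.sum_univ_two]
  ring

theorem hessian_log_det_hessian_ΦNegTriStar {x : Fin 2 → ℝ} (hx : ∀ k, 0 < x k) :
    hessian (fun y => log (hessian ΦNegTriStar y).det) x =
      diagonal (fun k => (x k ^ 2)⁻¹) + of fun _ _ => ((1 + ∑ k, x k) ^ 2)⁻¹ := by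
  have hlog {t : ℝ} (ht : 0 < t) : HasDerivAt (fun s => -log s) (-t⁻¹) t :=
    (hasDerivAt_log ht.ne').fun_neg
  have hinv {t : ℝ} (ht : 0 < t) : HasDerivAt (fun s => -s⁻¹) ((t ^ 2)⁻¹) t := by
    simpa using (hasDerivAt_inv ht.ne').fun_neg
  rw [hessian_congr_of_eventuallyEq ((eventually_forall_pos_nhds hx).mono
    fun z hz => log_det_hessian_ΦNegTriStar hz)]
  exact hessian_sum_comp_apply_add_comp_one_add_sum (f := fun t => -log t) (g := fun t => -log t)
    (f' := fun t => -t⁻¹) (g' := fun t => -t⁻¹) (f'' := fun t => (t ^ 2)⁻¹)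
    (g'' := fun t => (t ^ 2)⁻¹)
    ((eventually_forall_pos_nhds hx).mono fun z hz k => hlog (hz k))
    ((eventually_forall_pos_nhds hx).mono fun z hz => hlog (one_add_sum_pos hz))
    (fun k => hinv (hx k)) (hinv (one_add_sum_pos hx))

/-- `𝕎_NegTri` has negative Ricci curvature: the Ricci matrix equals the stated
matrix and is negative definite. -/
theorem negTri_negative_ricci (η : Fin 2 → ℝ) (h1 : 0 < η 0) (h2 : 0 < η 1) :
    ricciNegTri η =
      -(!![1 / (η 0) ^ 2 + 1 / (1 + η 0 + η 1) ^ 2, 1 / (1 + η 0 + η 1) ^ 2;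
          1 / (1 + η 0 + η 1) ^ 2, 1 / (η 1) ^ 2 + 1 / (1 + η 0 + η 1) ^ 2]) ∧
    (-(ricciNegTri η)).PosDef := by
  have hη : ∀ k, 0 < η k := Fin.forall_fin_two.2 ⟨h1, h2⟩
  have hR : -ricciNegTri η =
      diagonal (fun k => (η k ^ 2)⁻¹) + of fun _ _ => ((1 + ∑ k, η k) ^ 2)⁻¹ := by
    rw [ricciNegTri, neg_neg, hessian_log_det_hessian_ΦNegTriStar hη]
  refine ⟨?_, ?_⟩
  · rw [← neg_neg (ricciNegTri η), hR]
    congr 1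
    ext i j
    fin_cases i <;> fin_cases j <;> simp [Fin.sum_univ_two, add_assoc]
  · rw [hR]
    exact posDef_diagonal_add_of_const (fun k => inv_pos.2 (pow_pos (hη k) 2))
      (by positivity)
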